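/- arXiv:2401.16885 — 2 statements merged into one kernel-verified Lean document; each statement's English description precedes it below -/
import Mathlib

section
/- Let α: [0,T] → [0, α*] with α* < 1 be twice continuously differentiable, α(0) = 0, with |α'|, |α''| ≤ Q* on [0,T]. Define g(t) = d/dt [ t^{-α(t)} / Γ(1 - α(t)) ] for t ∈ (0,T]. Then there exists Q = Q(α*, Q*, T) with |g(t)| ≤ Q |ln t| for all t ∈ (0, min(T,1/2)]. -/
/-! The derivative is `t^(-α t) / Γ(1 - α t)` times
`G t = -α' t log t - α t / t + ψ(1 - α t) α' t` with `ψ = Γ'/Γ`. Since `α 0 = 0`, the mean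
value theorem gives `|α t| ≤ Q* t`; together with `t |log t| ≤ 1` this bounds `t^(-α t)` by
`exp Q*` and `α t / t` by `Q*`. The argument `1 - α t` stays in the compact interval
`[1 - α*, 1] ⊆ (0, ∞)`, on which `1/Γ` and `ψ` are bounded. Hence
`|g t| ≤ C (|log t| + 1)`, and `1 ≤ |log t| / log 2` for `t ≤ 1/2`. -/

open Real Set

namespace Real

theorem continuousOn_deriv_Gamma_Ioi : ContinuousOn (deriv Gamma) (Ioi 0) := by
  have hU : IsOpen {s : ℂ | 0 < s.re} := isOpen_lt continuous_const Complex.continuous_re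
  have hdiff : DifferentiableOn ℂ Complex.Gamma {s : ℂ | 0 < s.re} := fun s hs =>
    (Complex.differentiableAt_Gamma s fun m hm => by
      simp only [mem_ofPred_eq, hm, Complex.neg_re, Complex.natCast_re] at hs
      linarith [(m.cast_nonneg : (0 : ℝ) ≤ m)]).differentiableWithinAt
  have hcont : ContinuousOn (fun x : ℝ => (deriv Complex.Gamma x).re) (Ioi 0) :=
    Complex.continuous_re.comp_continuousOn <|
      (hdiff.analyticOnNhd hU).deriv.continuousOn.comp Complex.continuous_ofReal.continuousOn
        fun x hx => by simpa using hx
  refine hcont.congr fun x hx => ?_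
  have hΓ : (fun y : ℝ => (Complex.Gamma y).re) = Gamma := by
    funext y
    rw [Complex.Gamma_ofReal, Complex.ofReal_re]
  have h := (hdiff.differentiableAt (x := (x : ℂ)) (hU.mem_nhds (by simpa using hx))).hasDerivAt
  exact (hΓ ▸ h.real_of_complex).deriv

theorem continuousOn_inv_Gamma_Ioi : ContinuousOn (fun x => (Gamma x)⁻¹) (Ioi 0) :=
  differentiableOn_Gamma_Ioi.continuousOn.inv₀ fun _ hx => (Gamma_pos_of_pos hx).ne'

theorem continuousOn_logDeriv_Gamma_Ioi : ContinuousOn (logDeriv Gamma) (Ioi 0) :=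
  continuousOn_deriv_Gamma_Ioi.div differentiableOn_Gamma_Ioi.continuousOn
    fun _ hx => (Gamma_pos_of_pos hx).ne'

end Real

theorem IsCompact.exists_pos_bound_of_continuousOn {X E : Type*} [TopologicalSpace X]
    [SeminormedAddCommGroup E] {s : Set X} (hs : IsCompact s) {f : X → E}
    (hf : ContinuousOn f s) : ∃ C > 0, ∀ x ∈ s, ‖f x‖ ≤ C := by
  obtain ⟨C, hC0, hC⟩ := (hs.image_of_continuousOn hf).isBounded.exists_pos_norm_le
  exact ⟨C, hC0, fun x hx => hC _ (mem_image_of_mem f hx)⟩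

theorem hasDerivAt_exp_neg_mul_log_div_Gamma {α : ℝ → ℝ} {a t : ℝ}
    (hα : HasDerivAt α a t) (ht : 0 < t) (hΓ : 0 < 1 - α t) :
    HasDerivAt (fun τ => exp (-(α τ) * log τ) / Gamma (1 - α τ))
      (exp (-(α t) * log t) / Gamma (1 - α t) *
        (-a * log t - α t / t + logDeriv Gamma (1 - α t) * a)) t := by
  have hE := (hα.neg.mul (hasDerivAt_log ht.ne')).exp
  have hG := (differentiableOn_Gamma_Ioi.differentiableAt (Ioi_mem_nhds hΓ)).hasDerivAt.comp t
    (hα.const_sub 1)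
  refine (hE.div hG (Gamma_pos_of_pos hΓ).ne').congr_deriv ?_
  simp only [Pi.mul_apply, Pi.neg_apply, Function.comp_apply, logDeriv_apply]
  field_simp
  ring

theorem neg_mul_log_le_of_abs_le_mul {b t Q : ℝ} (ht0 : 0 < t) (ht1 : t ≤ 1) (hQ : 0 ≤ Q)
    (hb : |b| ≤ Q * t) : -b * log t ≤ Q := by
  calc -b * log t ≤ |b| * |log t| := by rw [neg_mul, ← abs_mul]; exact neg_le_abs _
    _ ≤ Q * t * |log t| := by gcongr
    _ = Q * |log t * t| := by rw [abs_mul, abs_of_pos ht0]; ring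
    _ ≤ Q * 1 := by gcongr; exact (abs_log_mul_self_lt t ht0 ht1).le
    _ = Q := mul_one Q

theorem abs_neg_mul_log_sub_div_add_mul_le {a b c t Q B : ℝ} (ht0 : 0 < t) (ht : t ≤ 1 / 2)
    (hQ : 0 ≤ Q) (ha : |a| ≤ Q) (hb : |b| ≤ Q * t) (hc : |c| ≤ B) :
    |-a * log t - b / t + c * a| ≤ (Q + (1 + B) * Q / log 2) * |log t| := by
  have hB : 0 ≤ B := (abs_nonneg c).trans hc
  have hlog2 : log 2 ≤ |log t| := by
    have : log t ≤ log (1 / 2) := log_le_log ht0 ht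
    rw [one_div, log_inv] at this
    rw [abs_of_neg (log_neg ht0 (by linarith))]
    linarith
  have hbt : |b / t| ≤ Q := by
    rw [abs_div, abs_of_pos ht0, div_le_iff₀ ht0]; exact hb
  calc |-a * log t - b / t + c * a|
      ≤ |a| * |log t| + |b / t| + |c| * |a| := by
        simpa only [sub_eq_add_neg, abs_neg, abs_mul, neg_mul] using
          abs_add_three (-(a * log t)) (-(b / t)) (c * a)
    _ ≤ Q * |log t| + Q + B * Q := by gcongr
    _ = Q * |log t| + (1 + B) * Q / log 2 * log 2 := by
        rw [div_mul_cancel₀ _ (log_pos one_lt_two).ne']; ring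
    _ ≤ (Q + (1 + B) * Q / log 2) * |log t| := by rw [add_mul _ _ |log t|]; gcongr

theorem stmt_11_general (T αstar Qstar : ℝ) (hαstar : αstar < 1)
    (hQ : 0 ≤ Qstar) (α α' : ℝ → ℝ)
    (hderiv : ∀ t ∈ Set.Icc (0 : ℝ) T, HasDerivAt α (α' t) t)
    (h0 : α 0 = 0)
    (hrange : ∀ t ∈ Set.Icc (0 : ℝ) T, 0 ≤ α t ∧ α t ≤ αstar)
    (hb1 : ∀ t ∈ Set.Icc (0 : ℝ) T, |α' t| ≤ Qstar) :
    ∃ Q > 0, ∀ t ∈ Set.Ioc (0 : ℝ) (min T (1 / 2)),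
      |deriv (fun τ => Real.exp (-(α τ) * Real.log τ) / Real.Gamma (1 - α τ)) t| ≤
        Q * |Real.log t| := by
  have hK : Icc (1 - αstar) 1 ⊆ Ioi 0 := fun x hx => by
    rw [mem_Ioi]; linarith [hx.1]
  obtain ⟨A, hA0, hA⟩ :=
    isCompact_Icc.exists_pos_bound_of_continuousOn (continuousOn_inv_Gamma_Ioi.mono hK)
  obtain ⟨B, hB0, hB⟩ :=
    isCompact_Icc.exists_pos_bound_of_continuousOn (continuousOn_logDeriv_Gamma_Ioi.mono hK)
  have hα_le : ∀ t ∈ Icc 0 T, |α t| ≤ Qstar * t := fun t ht => by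
    simpa [h0] using norm_image_sub_le_of_norm_deriv_le_segment'
      (fun x hx => (hderiv x hx).hasDerivWithinAt)
      (fun x hx => hb1 x (Ico_subset_Icc_self hx)) t ht
  refine ⟨exp Qstar * A * (Qstar + (1 + B) * Qstar / log 2) + 1, by positivity, ?_⟩
  rintro t ⟨ht0, htT⟩
  have ht : t ∈ Icc 0 T := ⟨ht0.le, htT.trans (min_le_left _ _)⟩
  have ht2 : t ≤ 1 / 2 := htT.trans (min_le_right _ _)
  have hαK : 1 - α t ∈ Icc (1 - αstar) 1 :=
    ⟨by linarith [(hrange t ht).2], by linarith [(hrange t ht).1]⟩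
  rw [(hasDerivAt_exp_neg_mul_log_div_Gamma (hderiv t ht) ht0 (hK hαK)).deriv, abs_mul,
    div_eq_mul_inv, abs_mul, abs_exp]
  calc _ ≤ exp Qstar * A * ((Qstar + (1 + B) * Qstar / log 2) * |log t|) := by
        gcongr
        · exact neg_mul_log_le_of_abs_le_mul ht0 (by linarith) hQ (hα_le t ht)
        · simpa using hA _ hαK
        · exact abs_neg_mul_log_sub_div_add_mul_le ht0 ht2 hQ (hb1 t ht) (hα_le t ht)
            (by simpa using hB _ hαK)
    _ ≤ _ := by rw [← mul_assoc]; gcongr; linarith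

/-- Let `α : [0,T] → [0,α*]`, `α* < 1`, be twice continuously differentiable with `α 0 = 0`
and `|α'|, |α''| ≤ Q*` on `[0,T]`. With `g t = d/dt (t^(-α t) / Γ(1 - α t))`, there is
`Q = Q(α*,Q*,T)` such that `|g t| ≤ Q |log t|` on `(0, min T (1/2)]`. -/
theorem stmt_11 (T αstar Qstar : ℝ) (hT : 0 < T) (hαstar0 : 0 ≤ αstar) (hαstar : αstar < 1)
    (hQ : 0 ≤ Qstar) (α α' α'' : ℝ → ℝ)
    (hderiv : ∀ t ∈ Set.Icc (0 : ℝ) T, HasDerivAt α (α' t) t)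
    (hderiv' : ∀ t ∈ Set.Icc (0 : ℝ) T, HasDerivAt α' (α'' t) t)
    (hcont : ContinuousOn α'' (Set.Icc (0 : ℝ) T))
    (h0 : α 0 = 0)
    (hrange : ∀ t ∈ Set.Icc (0 : ℝ) T, 0 ≤ α t ∧ α t ≤ αstar)
    (hb1 : ∀ t ∈ Set.Icc (0 : ℝ) T, |α' t| ≤ Qstar)
    (hb2 : ∀ t ∈ Set.Icc (0 : ℝ) T, |α'' t| ≤ Qstar) :
    ∃ Q > 0, ∀ t ∈ Set.Ioc (0 : ℝ) (min T (1 / 2)),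
      |deriv (fun τ => Real.exp (-(α τ) * Real.log τ) / Real.Gamma (1 - α τ)) t| ≤
        Q * |Real.log t| :=
  stmt_11_general T αstar Qstar hαstar hQ α α' hderiv h0 hrange hb1
end

section
/- Under the assumptions of the previous setup, if additionally α'(0) = 0 and α''(0) ≠ 0, then g(t) = d/dt[t^{-α(t)}/Γ(1-α(t))] is bounded on (0,T]: |g(t)| ≤ Q for some Q = Q(α*, Q*, T). -/
/-!
Since `1 / Γ` is entire, `t ^ (-α t) / Γ (1 - α t) = exp (u t) * (1 / Γ) (1 - α t)` with
`u t = -α t * log t` needs no lower bound on `Γ`, and its derivative is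
`exp u * (u' * (1 / Γ) (1 - α) - (1 / Γ)' (1 - α) * α')`. Taylor's theorem with
`α 0 = α' 0 = 0` and `|α''| ≤ Q*` gives `|α'| ≤ Q* t` and `|α| ≤ Q* t²`, so
`u = -(α / t) (t log t)` and `u' = -(α' / t) (t log t) - α / t` stay bounded, because `t log t`
is bounded on `[0, T]`.
-/

open Real Set

/-- Mathlib's `Gamma` vanishes at its poles, so `(Gamma x)⁻¹` is the entire function `1 / Γ`. -/
theorem Real.contDiff_inv_Gamma {n : WithTop ℕ∞} : ContDiff ℝ n fun x : ℝ => (Gamma x)⁻¹ := by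
  have h : (fun x : ℝ => (Gamma x)⁻¹) = fun x : ℝ => ((Complex.Gamma x)⁻¹).re := by
    ext x
    rw [Complex.Gamma_ofReal, ← Complex.ofReal_inv, Complex.ofReal_re]
  rw [h]
  exact Complex.differentiable_one_div_Gamma.contDiff.real_of_complex

theorem HasDerivAt.div_Gamma_comp {f g : ℝ → ℝ} {f' g' t : ℝ} (hf : HasDerivAt f f' t)
    (hg : HasDerivAt g g' t) :
    HasDerivAt (fun τ => f τ / Gamma (g τ))
      (f' * (Gamma (g t))⁻¹ + f t * (_root_.deriv (fun x => (Gamma x)⁻¹) (g t) * g')) t := by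
  have hR := (contDiff_inv_Gamma (n := 1)).differentiable one_ne_zero (g t)
  simp only [div_eq_mul_inv]
  exact hf.mul (hR.hasDerivAt.comp t hg)

theorem abs_le_mul_of_hasDerivAt_of_abs_le {f f' : ℝ → ℝ} {T C : ℝ} (hf0 : f 0 = 0)
    (hf : ∀ t ∈ Icc 0 T, HasDerivAt f (f' t) t) (hf' : ∀ t ∈ Icc 0 T, |f' t| ≤ C) :
    ∀ t ∈ Icc 0 T, |f t| ≤ C * t := by
  simpa [hf0] using norm_image_sub_le_of_norm_deriv_le_segment'
    (fun t ht => (hf t ht).hasDerivWithinAt) (fun t ht => hf' t (Ico_subset_Icc_self ht))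

theorem abs_le_mul_sq_of_hasDerivAt_of_abs_le {f f' f'' : ℝ → ℝ} {T C : ℝ} (hC : 0 ≤ C)
    (hf0 : f 0 = 0) (hf'0 : f' 0 = 0) (hf : ∀ t ∈ Icc 0 T, HasDerivAt f (f' t) t)
    (hf' : ∀ t ∈ Icc 0 T, HasDerivAt f' (f'' t) t) (hf'' : ∀ t ∈ Icc 0 T, |f'' t| ≤ C) :
    ∀ t ∈ Icc 0 T, |f t| ≤ C * t * t := by
  have hf'_le := abs_le_mul_of_hasDerivAt_of_abs_le hf'0 hf' hf''
  intro t ht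
  have hsub : Icc 0 t ⊆ Icc 0 T := Icc_subset_Icc_right ht.2
  refine abs_le_mul_of_hasDerivAt_of_abs_le hf0 (fun x hx => hf x (hsub hx))
    (fun x hx => (hf'_le x (hsub hx)).trans ?_) t (right_mem_Icc.2 ht.1)
  gcongr
  exact hx.2

theorem exists_abs_deriv_exp_div_Gamma_le {s : Set ℝ} {u u' a a' : ℝ → ℝ} {U A C₁ C₂ : ℝ}
    (hu : ∀ t ∈ s, HasDerivAt u (u' t) t) (ha : ∀ t ∈ s, HasDerivAt a (a' t) t)
    (hu_le : ∀ t ∈ s, u t ≤ U) (ha_le : ∀ t ∈ s, |a t| ≤ A)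
    (hu' : ∀ t ∈ s, |u' t| ≤ C₁) (ha' : ∀ t ∈ s, |a' t| ≤ C₂) :
    ∃ Q > 0, ∀ t ∈ s, |deriv (fun τ => exp (u τ) / Gamma (1 - a τ)) t| ≤ Q := by
  have hR : ContDiff ℝ 1 fun x : ℝ => (Gamma x)⁻¹ := contDiff_inv_Gamma
  obtain ⟨M₀, hM₀⟩ := (isCompact_closedBall (0 : ℝ) (1 + A)).exists_bound_of_continuousOn
    hR.continuous.continuousOn
  obtain ⟨M₁, hM₁⟩ := (isCompact_closedBall (0 : ℝ) (1 + A)).exists_bound_of_continuousOn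
    (hR.continuous_deriv le_rfl).continuousOn
  refine ⟨max (exp U * (C₁ * M₀ + M₁ * C₂)) 1, by positivity, fun t ht => ?_⟩
  have hball : 1 - a t ∈ Metric.closedBall 0 (1 + A) := by
    rw [Metric.mem_closedBall, dist_zero_right, norm_eq_abs]
    linarith [abs_sub (1 : ℝ) (a t), ha_le t ht, abs_one (α := ℝ)]
  have hR₀ := hM₀ _ hball
  have hR₁ := hM₁ _ hball
  rw [norm_eq_abs] at hR₀ hR₁
  have hC₁ : 0 ≤ C₁ := (abs_nonneg _).trans (hu' t ht)
  have hC₂ : 0 ≤ C₂ := (abs_nonneg _).trans (ha' t ht)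
  have hM₀_nonneg : 0 ≤ M₀ := (abs_nonneg _).trans hR₀
  rw [((hu t ht).exp.div_Gamma_comp ((ha t ht).const_sub 1)).deriv]
  refine le_trans ?_ (le_max_left _ _)
  calc _ = |exp (u t) * (u' t * (Gamma (1 - a t))⁻¹ -
          deriv (fun x => (Gamma x)⁻¹) (1 - a t) * a' t)| := by
        congr 1; ring
    _ = exp (u t) * |u' t * (Gamma (1 - a t))⁻¹ -
          deriv (fun x => (Gamma x)⁻¹) (1 - a t) * a' t| := by
        rw [abs_mul, abs_exp]
    _ ≤ exp U * (C₁ * M₀ + M₁ * C₂) := by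
        grw [abs_sub, abs_mul, abs_mul, hu_le t ht, hu' t ht, ha' t ht, hR₀, hR₁]

theorem exists_abs_deriv_exp_neg_mul_log_div_Gamma_le {T C : ℝ} {a a' : ℝ → ℝ} (hC : 0 ≤ C)
    (ha : ∀ t ∈ Ioc 0 T, HasDerivAt a (a' t) t) (ha_le : ∀ t ∈ Ioc 0 T, |a t| ≤ C * t * t)
    (ha'_le : ∀ t ∈ Ioc 0 T, |a' t| ≤ C * t) :
    ∃ Q > 0, ∀ t ∈ Ioc 0 T, |deriv (fun τ => exp (-(a τ) * log τ) / Gamma (1 - a τ)) t| ≤ Q := by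
  obtain ⟨L, hL⟩ := isCompact_Icc.exists_bound_of_continuousOn
    (continuous_mul_log.continuousOn (s := Icc 0 T))
  have hlog : ∀ t ∈ Ioc 0 T, t * |log t| ≤ L := fun t ht => by
    simpa [abs_mul, abs_of_pos ht.1] using hL t (Ioc_subset_Icc_self ht)
  refine exists_abs_deriv_exp_div_Gamma_le (u' := fun t => -(a' t) * log t + -(a t) * t⁻¹)
    (U := C * T * L) (A := C * T * T) (C₁ := C * L + C * T) (C₂ := C * T)
    (fun t ht => (ha t ht).neg.mul (hasDerivAt_log ht.1.ne')) ha ?_ ?_ ?_ ?_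
  all_goals
    intro t ht
    obtain ⟨ht0, htT⟩ := ht
    have htlog : 0 ≤ t * |log t| := mul_nonneg ht0.le (abs_nonneg _)
    have hCT : 0 ≤ C * T := mul_nonneg hC (ht0.le.trans htT)
  · calc -(a t) * log t ≤ |a t| * |log t| := by rw [neg_mul, ← abs_mul]; exact neg_le_abs _
      _ ≤ C * t * t * |log t| := by gcongr; exact ha_le t ⟨ht0, htT⟩
      _ = C * t * (t * |log t|) := by ring
      _ ≤ C * T * L := by gcongr; exact hlog t ⟨ht0, htT⟩
  · exact (ha_le t ⟨ht0, htT⟩).trans (by gcongr)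
  · calc |-(a' t) * log t + -(a t) * t⁻¹| ≤ |a' t| * |log t| + |a t| * t⁻¹ := by
          grw [abs_add_le, abs_mul, abs_mul, abs_neg, abs_neg, abs_inv, abs_of_pos ht0]
      _ ≤ C * t * |log t| + C * t * t * t⁻¹ := by
          gcongr; exacts [ha'_le t ⟨ht0, htT⟩, ha_le t ⟨ht0, htT⟩]
      _ = C * (t * |log t|) + C * t := by field_simp
      _ ≤ C * L + C * T := by gcongr; exact hlog t ⟨ht0, htT⟩
  · exact (ha'_le t ⟨ht0, htT⟩).trans (by gcongr)

theorem stmt_12_general (T Qstar : ℝ)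
    (hQ : 0 ≤ Qstar) (α α' α'' : ℝ → ℝ)
    (hderiv : ∀ t ∈ Set.Icc (0 : ℝ) T, HasDerivAt α (α' t) t)
    (hderiv' : ∀ t ∈ Set.Icc (0 : ℝ) T, HasDerivAt α' (α'' t) t)
    (h0 : α 0 = 0) (h0' : α' 0 = 0)
    (hb2 : ∀ t ∈ Set.Icc (0 : ℝ) T, |α'' t| ≤ Qstar) :
    ∃ Q > 0, ∀ t ∈ Set.Ioc (0 : ℝ) T,
      |deriv (fun τ => Real.exp (-(α τ) * Real.log τ) / Real.Gamma (1 - α τ)) t| ≤ Q := by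
  have hα' := abs_le_mul_of_hasDerivAt_of_abs_le h0' hderiv' hb2
  have hα := abs_le_mul_sq_of_hasDerivAt_of_abs_le hQ h0 h0' hderiv hderiv' hb2
  exact exists_abs_deriv_exp_neg_mul_log_div_Gamma_le hQ
    (fun t ht => hderiv t (Ioc_subset_Icc_self ht)) (fun t ht => hα t (Ioc_subset_Icc_self ht))
    (fun t ht => hα' t (Ioc_subset_Icc_self ht))

/-- Under the same setup as before, if additionally `α' 0 = 0` and `α'' 0 ≠ 0`, then
`g t = d/dt (t^(-α t) / Γ(1 - α t))` is bounded on `(0,T]`. -/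
theorem stmt_12 (T αstar Qstar : ℝ) (hT : 0 < T) (hαstar0 : 0 ≤ αstar) (hαstar : αstar < 1)
    (hQ : 0 ≤ Qstar) (α α' α'' : ℝ → ℝ)
    (hderiv : ∀ t ∈ Set.Icc (0 : ℝ) T, HasDerivAt α (α' t) t)
    (hderiv' : ∀ t ∈ Set.Icc (0 : ℝ) T, HasDerivAt α' (α'' t) t)
    (hcont : ContinuousOn α'' (Set.Icc (0 : ℝ) T))
    (h0 : α 0 = 0) (h0' : α' 0 = 0) (h0'' : α'' 0 ≠ 0)
    (hrange : ∀ t ∈ Set.Icc (0 : ℝ) T, 0 ≤ α t ∧ α t ≤ αstar)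
    (hb1 : ∀ t ∈ Set.Icc (0 : ℝ) T, |α' t| ≤ Qstar)
    (hb2 : ∀ t ∈ Set.Icc (0 : ℝ) T, |α'' t| ≤ Qstar) :
    ∃ Q > 0, ∀ t ∈ Set.Ioc (0 : ℝ) T,
      |deriv (fun τ => Real.exp (-(α τ) * Real.log τ) / Real.Gamma (1 - α τ)) t| ≤ Q :=
  stmt_12_general T Qstar hQ α α' α'' hderiv hderiv' h0 h0' hb2
end
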